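/- H∞ Riccati inequality implies induced L₂ gain bound (bounded real lemma, sufficiency, stable case): if A is Hurwitz and there exists P ≻ 0 with P A + Aᵀ P + (1/ε²) P B Bᵀ P + Cᵀ C ≺ 0, then the transfer function T(s) = C (sI − A)⁻¹ B satisfies ‖T(iω)‖ < ε for all real ω. -/

import Mathlib

/-!
Fix `ω` and `u ≠ 0`, and put `x = (iω - A)⁻¹ B u`, so that `A x = iω x - B u` and `T(iω) u = C x`.
Because `P` is Hermitian and `iω` is purely imaginary, the real part of `xᴴ (P A + Aᴴ P) x` is
`-2 Re ⟪v, u⟫` with `v = Bᴴ P x`, so the Riccati inequality at `x` reads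
`‖C x‖² < 2 Re ⟪v, u⟫ - ε⁻² ‖v‖²`, and completing the square bounds the right-hand side by
`ε² ‖u‖²`. The operator norm on a finite-dimensional space is attained on the unit sphere, so the
strict pointwise bound `‖T(iω) u‖ < ε ‖u‖` gives `‖T(iω)‖ < ε`.
-/

open Matrix
open scoped ComplexOrder

theorem ContinuousLinearMap.opNorm_lt_of_forall_ne_zero {𝕜 E F : Type*} [RCLike 𝕜]
    [NormedAddCommGroup E] [NormedSpace 𝕜 E] [FiniteDimensional 𝕜 E]
    [SeminormedAddCommGroup F] [NormedSpace 𝕜 F] (T : E →L[𝕜] F) {c : ℝ} (hc : 0 < c)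
    (h : ∀ x ≠ 0, ‖T x‖ < c * ‖x‖) : ‖T‖ < c := by
  rcases subsingleton_or_nontrivial E with _ | _
  · rwa [Subsingleton.elim T 0, opNorm_zero]
  have := FiniteDimensional.proper_rclike 𝕜 E
  rw [← T.sSup_sphere_eq_norm, (isCompact_sphere 0 1).sSup_lt_iff_of_continuous
    (Set.nonempty_coe_sort.1 (NormedSpace.sphere_nonempty_rclike 𝕜 zero_le_one))
    T.continuous.norm.continuousOn]
  intro x hx
  simpa [mem_sphere_zero_iff_norm.1 hx] using h x (ne_zero_of_mem_unit_sphere ⟨x, hx⟩)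

section EuclideanSpace

variable {𝕜 ι : Type*} [RCLike 𝕜] [Fintype ι]

theorem EuclideanSpace.norm_toLp_sq (y : ι → 𝕜) :
    ‖WithLp.toLp 2 y‖ ^ 2 = RCLike.re (star y ⬝ᵥ y) := by
  rw [← inner_self_eq_norm_sq (𝕜 := 𝕜), EuclideanSpace.inner_toLp_toLp, dotProduct_comm]

theorem EuclideanSpace.re_star_dotProduct_le (v u : ι → 𝕜) :
    RCLike.re (star v ⬝ᵥ u) ≤ ‖WithLp.toLp 2 v‖ * ‖WithLp.toLp 2 u‖ := by
  simpa [EuclideanSpace.inner_toLp_toLp, dotProduct_comm] using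
    re_inner_le_norm (𝕜 := 𝕜) (WithLp.toLp 2 v) (WithLp.toLp 2 u)

end EuclideanSpace

theorem two_mul_sub_inv_sq_mul_sq_le {ε : ℝ} (hε : ε ≠ 0) (a b : ℝ) :
    2 * a * b - (ε ^ 2)⁻¹ * a ^ 2 ≤ ε ^ 2 * b ^ 2 := by
  calc 2 * a * b - (ε ^ 2)⁻¹ * a ^ 2 = ε ^ 2 * b ^ 2 - (a / ε - ε * b) ^ 2 := by
        field_simp
        ring
    _ ≤ ε ^ 2 * b ^ 2 := sub_le_self _ (sq_nonneg _)

theorem Matrix.star_mulVec_dotProduct {R l n : Type*} [NonUnitalSemiring R] [StarRing R]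
    [Fintype l] [Fintype n] (M : Matrix l n R) (x : n → R) (y : l → R) :
    star (M *ᵥ x) ⬝ᵥ y = star x ⬝ᵥ Mᴴ *ᵥ y := by
  rw [star_mulVec, dotProduct_mulVec]

section RealToComplex

variable {m n p : Type*}

theorem Matrix.conjTranspose_map_ofReal (X : Matrix m n ℝ) :
    (X.map Complex.ofReal)ᴴ = Xᵀ.map Complex.ofReal := by
  ext
  simp

theorem Matrix.map_ofReal_mul [Fintype n] (X : Matrix m n ℝ) (Y : Matrix n p ℝ) :
    (X * Y).map Complex.ofReal = X.map Complex.ofReal * Y.map Complex.ofReal :=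
  Matrix.map_mul (f := Complex.ofRealHom)

variable [Fintype n]

theorem Matrix.re_star_dotProduct_map_ofReal_mulVec (Q : Matrix n n ℝ) (x : n → ℂ) :
    (star x ⬝ᵥ Q.map Complex.ofReal *ᵥ x).re =
      (fun i ↦ (x i).re) ⬝ᵥ Q *ᵥ (fun i ↦ (x i).re) +
        (fun i ↦ (x i).im) ⬝ᵥ Q *ᵥ (fun i ↦ (x i).im) := by
  simp only [dotProduct, mulVec, Matrix.map_apply, Pi.star_apply, Complex.re_sum,
    Finset.mul_sum, ← Finset.sum_add_distrib]
  refine Finset.sum_congr rfl fun i _ ↦ Finset.sum_congr rfl fun j _ ↦ ?_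
  simp only [Complex.mul_re, Complex.mul_im, Complex.star_def, Complex.conj_re, Complex.conj_im,
    Complex.ofReal_re, Complex.ofReal_im]
  ring

theorem Matrix.PosDef.map_ofReal {Q : Matrix n n ℝ} (hQ : Q.PosDef) :
    (Q.map Complex.ofReal).PosDef := by
  have hQc : (Q.map Complex.ofReal).IsHermitian :=
    hQ.isHermitian.map _ fun r ↦ (Complex.conj_ofReal r).symm
  refine posDef_iff_dotProduct_mulVec.2 ⟨hQc, fun x hx ↦ ?_⟩
  refine Complex.lt_def.2 ⟨?_, (hQc.im_star_dotProduct_mulVec_self x).symm⟩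
  rw [Complex.zero_re, re_star_dotProduct_map_ofReal_mulVec]
  have hre := hQ.posSemidef.dotProduct_mulVec_nonneg (fun i ↦ (x i).re)
  have him := hQ.posSemidef.dotProduct_mulVec_nonneg (fun i ↦ (x i).im)
  simp only [star_trivial] at hre him
  by_cases h : (fun i ↦ (x i).re) = 0
  · have : (fun i ↦ (x i).im) ≠ 0 := fun h' ↦ hx <| funext fun i ↦
      Complex.ext (congrFun h i) (congrFun h' i)
    simpa using add_lt_add_of_le_of_lt hre (hQ.dotProduct_mulVec_pos this)
  · simpa using add_lt_add_of_lt_of_le (hQ.dotProduct_mulVec_pos h) him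

theorem Matrix.PosDef.riccati_map_ofReal [Fintype m] [Fintype p] {A P : Matrix n n ℝ}
    {B : Matrix n m ℝ} {C : Matrix p n ℝ} {γ : ℝ}
    (h : (-(P * A + Aᵀ * P + γ • (P * B * Bᵀ * P) + Cᵀ * C)).PosDef) :
    (-(P.map Complex.ofReal * A.map Complex.ofReal + (A.map Complex.ofReal)ᴴ * P.map Complex.ofReal
      + γ • (P.map Complex.ofReal * B.map Complex.ofReal * (B.map Complex.ofReal)ᴴ *
        P.map Complex.ofReal) + (C.map Complex.ofReal)ᴴ * C.map Complex.ofReal)).PosDef := by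
  simpa [conjTranspose_map_ofReal, Matrix.map_neg, Matrix.map_add, map_ofReal_mul,
    Matrix.map_smul] using h.map_ofReal

end RealToComplex

section Riccati

variable {n m p : Type*} [Fintype n] [Fintype m] [Fintype p]
  {A P : Matrix n n ℂ} {B : Matrix n m ℂ} {C : Matrix p n ℂ}

theorem Matrix.IsHermitian.star_dotProduct_mulVec (hP : P.IsHermitian) (x y : n → ℂ) :
    star x ⬝ᵥ P *ᵥ y = star (P *ᵥ x) ⬝ᵥ y := by
  rw [star_mulVec_dotProduct, hP.eq]

theorem Matrix.re_star_dotProduct_riccati_mulVec (hP : P.IsHermitian) (γ : ℝ) {s : ℂ}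
    (hs : s.re = 0) {x : n → ℂ} {u : m → ℂ} (hx : A *ᵥ x = s • x - B *ᵥ u) :
    (star x ⬝ᵥ (P * A + Aᴴ * P + γ • (P * B * Bᴴ * P) + Cᴴ * C) *ᵥ x).re =
      -2 * (star (Bᴴ *ᵥ P *ᵥ x) ⬝ᵥ u).re
        + γ * (star (Bᴴ *ᵥ P *ᵥ x) ⬝ᵥ Bᴴ *ᵥ P *ᵥ x).re + (star (C *ᵥ x) ⬝ᵥ C *ᵥ x).re := by
  have hPA : star x ⬝ᵥ (P * A) *ᵥ x =
      s * (star x ⬝ᵥ P *ᵥ x) - star (Bᴴ *ᵥ P *ᵥ x) ⬝ᵥ u := by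
    rw [← mulVec_mulVec, hP.star_dotProduct_mulVec, hx, dotProduct_sub, dotProduct_smul,
      ← hP.star_dotProduct_mulVec, star_mulVec_dotProduct Bᴴ, conjTranspose_conjTranspose,
      smul_eq_mul]
  have hAP : star x ⬝ᵥ (Aᴴ * P) *ᵥ x = star (star x ⬝ᵥ (P * A) *ᵥ x) := by
    rw [← mulVec_mulVec, ← star_mulVec_dotProduct, star_dotProduct,
      ← hP.star_dotProduct_mulVec, mulVec_mulVec]
  have hPBBP : star x ⬝ᵥ (P * B * Bᴴ * P) *ᵥ x =
      star (Bᴴ *ᵥ P *ᵥ x) ⬝ᵥ Bᴴ *ᵥ P *ᵥ x := by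
    rw [star_mulVec_dotProduct, conjTranspose_conjTranspose, ← hP.star_dotProduct_mulVec]
    simp only [mulVec_mulVec, Matrix.mul_assoc]
  have hCC : star x ⬝ᵥ (Cᴴ * C) *ᵥ x = star (C *ᵥ x) ⬝ᵥ C *ᵥ x := by
    rw [← mulVec_mulVec, ← star_mulVec_dotProduct]
  have hPx_real : (star x ⬝ᵥ P *ᵥ x).im = 0 := hP.im_star_dotProduct_mulVec_self x
  have hre_smul_real : (s * (star x ⬝ᵥ P *ᵥ x)).re = 0 := by
    rw [Complex.mul_re, hs, hPx_real]
    ring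
  rw [add_mulVec, add_mulVec, add_mulVec, dotProduct_add, dotProduct_add, dotProduct_add,
    smul_mulVec, dotProduct_smul, hAP, hPBBP, hCC, hPA]
  simp only [Complex.add_re, Complex.sub_re, Complex.star_def, Complex.conj_re, hre_smul_real,
    Complex.real_smul, Complex.re_ofReal_mul]
  ring

theorem Matrix.norm_mulVec_lt_of_riccati {ε : ℝ} (hε : 0 < ε) (hP : P.IsHermitian)
    (hR : (-(P * A + Aᴴ * P + (ε ^ 2)⁻¹ • (P * B * Bᴴ * P) + Cᴴ * C)).PosDef) {s : ℂ}
    (hs : s.re = 0) {x : n → ℂ} {u : m → ℂ} (hx : A *ᵥ x = s • x - B *ᵥ u) (hu : u ≠ 0) :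
    ‖WithLp.toLp 2 (C *ᵥ x)‖ < ε * ‖WithLp.toLp 2 u‖ := by
  have hu' : 0 < ‖WithLp.toLp 2 u‖ := by simpa using hu
  rcases eq_or_ne x 0 with rfl | hx0
  · simpa using mul_pos hε hu'
  have hpos := hR.re_dotProduct_pos hx0
  rw [neg_mulVec, dotProduct_neg, map_neg, RCLike.re_to_complex,
    re_star_dotProduct_riccati_mulVec hP _ hs hx] at hpos
  simp only [← RCLike.re_to_complex, ← EuclideanSpace.norm_toLp_sq] at hpos
  have hvu := EuclideanSpace.re_star_dotProduct_le (Bᴴ *ᵥ P *ᵥ x) u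
  have hsq := two_mul_sub_inv_sq_mul_sq_le hε.ne' ‖WithLp.toLp 2 (Bᴴ *ᵥ P *ᵥ x)‖
    ‖WithLp.toLp 2 u‖
  refine lt_of_pow_lt_pow_left₀ 2 (by positivity) ?_
  rw [mul_pow]
  linarith

theorem Matrix.norm_transfer_lt_of_riccati [DecidableEq n] [DecidableEq m] {ε : ℝ} (hε : 0 < ε)
    (hP : P.IsHermitian)
    (hR : (-(P * A + Aᴴ * P + (ε ^ 2)⁻¹ • (P * B * Bᴴ * P) + Cᴴ * C)).PosDef) {s : ℂ}
    (hs : s.re = 0) (hsA : s ∉ spectrum ℂ A) :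
    ‖LinearMap.toContinuousLinearMap (toEuclideanLin (C * (s • 1 - A)⁻¹ * B))‖ < ε := by
  rw [spectrum.notMem_iff, Algebra.algebraMap_eq_smul_one, isUnit_iff_isUnit_det] at hsA
  refine ContinuousLinearMap.opNorm_lt_of_forall_ne_zero _ hε fun u hu ↦ ?_
  set x := ((s • 1 - A)⁻¹ * B) *ᵥ u.ofLp
  have hx : A *ᵥ x = s • x - B *ᵥ u.ofLp := by
    have hres : (s • 1 - A) *ᵥ x = B *ᵥ u.ofLp := by
      rw [mulVec_mulVec, ← Matrix.mul_assoc, mul_nonsing_inv _ hsA, Matrix.one_mul]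
    rw [sub_mulVec, smul_mulVec, one_mulVec] at hres
    rw [← hres, sub_sub_cancel]
  have key := norm_mulVec_lt_of_riccati hε hP hR hs hx (by simpa using hu)
  rwa [WithLp.toLp_ofLp, mulVec_mulVec, ← Matrix.mul_assoc] at key

end Riccati

/-- Bounded real lemma (sufficiency, stable case): if `A` is Hurwitz and
`P ≻ 0` satisfies `P A + Aᵀ P + (1/ε²) P B Bᵀ P + Cᵀ C ≺ 0`, then the transfer
function `T(iω) = C (iωI − A)⁻¹ B` has spectral norm `< ε` for all real `ω`. -/
theorem bounded_real_lemma_sufficiency {n m p : ℕ}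
    (A P : Matrix (Fin n) (Fin n) ℝ) (B : Matrix (Fin n) (Fin m) ℝ)
    (C : Matrix (Fin p) (Fin n) ℝ) (ε : ℝ) (hε : 0 < ε)
    (hHurwitz : ∀ μ ∈ spectrum ℂ (A.map (Complex.ofReal : ℝ → ℂ)), μ.re < 0)
    (hP : P.PosDef)
    (hRiccati : (-(P * A + Aᵀ * P + (ε ^ 2)⁻¹ • (P * B * Bᵀ * P) + Cᵀ * C)).PosDef) :
    ∀ ω : ℝ,
      ‖LinearMap.toContinuousLinearMap (Matrix.toEuclideanLin
        ((C.map (Complex.ofReal : ℝ → ℂ)) *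
          ((Complex.I * ω) • (1 : Matrix (Fin n) (Fin n) ℂ) -
            A.map (Complex.ofReal : ℝ → ℂ))⁻¹ *
          (B.map (Complex.ofReal : ℝ → ℂ))))‖ < ε := by
  intro ω
  refine norm_transfer_lt_of_riccati hε hP.map_ofReal.isHermitian hRiccati.riccati_map_ofReal
    (by simp) fun hiω ↦ ?_
  simpa using hHurwitz _ hiω
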